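/- Let K be a closed convex cone in E, x̄ feasible (g(x̄) ∈ K), and suppose Robinson's constraint qualification holds: 0 ∈ int(Im(Dg(x̄)) + K − g(x̄)). If sequences x^k → x̄, μ^k ∈ K° satisfy ∇f(x^k) + Dg(x^k)*[μ^k] → 0 and ⟨μ^k, Π_K(g(x^k))⟩ → 0, then {μ^k} is bounded. -/

import Mathlib

/-! If the multipliers were unbounded, a subsequence of the directions `μᵏ / ‖μᵏ‖` would converge
to a unit vector `μ`. Dividing stationarity and complementarity by `‖μᵏ‖` and passing to the limit
(the projections `Π_K (g xᵏ)` tend to `g x̄ ∈ K`) gives `Dg(x̄)* μ = 0`, `μ ∈ K°` and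
`⟪μ, g x̄⟫ = 0`. Then `μ` is nonpositive on the Robinson set `Im Dg(x̄) + K - g x̄`, which is a
neighbourhood of `0`, so `μ = 0`, a contradiction. -/

open Filter Topology
open scoped RealInnerProductSpace

/-- `p` is the orthogonal (metric) projection of `z` onto `C`. -/
def IsProjection {E : Type*} [NormedAddCommGroup E] (C : Set E) (z p : E) : Prop :=
  p ∈ C ∧ ∀ w ∈ C, ‖z - p‖ ≤ ‖z - w‖

/-- The polar cone of a set. -/
def polarCone {E : Type*} [NormedAddCommGroup E] [InnerProductSpace ℝ E] (C : Set E) : Set E :=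
  {y | ∀ c ∈ C, ⟪y, c⟫ ≤ 0}

section Sequences

variable {E : Type*} [NormedAddCommGroup E]

theorem exists_strictMono_natCast_lt_norm {u : ℕ → E} (hu : ¬∃ M, ∀ k, ‖u k‖ ≤ M) :
    ∃ φ : ℕ → ℕ, StrictMono φ ∧ ∀ m : ℕ, (m : ℝ) < ‖u (φ m)‖ := by
  refine extraction_forall_of_frequently (P := fun m k => (m : ℝ) < ‖u k‖) fun m => ?_
  by_contra h
  obtain ⟨M, hM⟩ := IsBoundedUnder.bddAbove_range (f := fun k => ‖u k‖) ⟨m, by simpa using h⟩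
  exact hu ⟨M, fun k => hM ⟨k, rfl⟩⟩

variable [NormedSpace ℝ E] [FiniteDimensional ℝ E]

theorem exists_tendsto_inv_norm_smul_of_unbounded {u : ℕ → E} (hu : ¬∃ M, ∀ k, ‖u k‖ ≤ M) :
    ∃ σ : ℕ → ℕ, Tendsto σ atTop atTop ∧ Tendsto (fun m => ‖u (σ m)‖) atTop atTop ∧
      ∃ μ : E, ‖μ‖ = 1 ∧ Tendsto (fun m => ‖u (σ m)‖⁻¹ • u (σ m)) atTop (𝓝 μ) := by
  obtain ⟨φ, hφ, hφu⟩ := exists_strictMono_natCast_lt_norm hu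
  have hsphere : ∀ m, ‖u (φ m)‖⁻¹ • u (φ m) ∈ Metric.sphere (0 : E) 1 := fun m => by
    simp [norm_smul, ((Nat.cast_nonneg m).trans_lt (hφu m)).ne']
  obtain ⟨μ, hμ, ψ, hψ, hlim⟩ := (isCompact_sphere (0 : E) 1).tendsto_subseq hsphere
  refine ⟨φ ∘ ψ, (hφ.comp hψ).tendsto_atTop, ?_, μ, mem_sphere_zero_iff_norm.1 hμ, hlim⟩
  refine tendsto_atTop_mono (fun m => ?_) tendsto_natCast_atTop_atTop
  exact (Nat.cast_le.2 (hψ.id_le m)).trans (hφu _).le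

end Sequences

section Rescaling

variable {ι : Type*} {l : Filter ι} [l.NeBot] {c : ι → ℝ}

theorem apply_eq_zero_of_tendsto_add_apply {E F : Type*} [NormedAddCommGroup E]
    [NormedSpace ℝ E] [NormedAddCommGroup F] [NormedSpace ℝ F] {a : ι → F} {a₀ : F}
    {T : ι → E →L[ℝ] F} {T₀ : E →L[ℝ] F} {μ : ι → E} {μ₀ : E} (hc : Tendsto c l atTop)
    (ha : Tendsto a l (𝓝 a₀)) (hT : Tendsto T l (𝓝 T₀))
    (hμ : Tendsto (fun i => (c i)⁻¹ • μ i) l (𝓝 μ₀))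
    (h : Tendsto (fun i => a i + T i (μ i)) l (𝓝 0)) : T₀ μ₀ = 0 := by
  have hlim : Tendsto (fun i => T i ((c i)⁻¹ • μ i)) l (𝓝 (T₀ μ₀)) :=
    ((continuous_fst.clm_apply continuous_snd).tendsto (T₀, μ₀)).comp (hT.prodMk_nhds hμ)
  have hzero : Tendsto (fun i => (c i)⁻¹ • (a i + T i (μ i)) - (c i)⁻¹ • a i) l (𝓝 0) := by
    simpa using (hc.inv_tendsto_atTop.smul h).sub (hc.inv_tendsto_atTop.smul ha)
  refine tendsto_nhds_unique hlim (hzero.congr fun i => ?_)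
  rw [smul_add, add_sub_cancel_left, map_smul]

theorem inner_eq_zero_of_tendsto_inner {E : Type*} [NormedAddCommGroup E]
    [InnerProductSpace ℝ E] {μ p : ι → E} {μ₀ p₀ : E} (hc : Tendsto c l atTop)
    (hμ : Tendsto (fun i => (c i)⁻¹ • μ i) l (𝓝 μ₀)) (hp : Tendsto p l (𝓝 p₀))
    (h : Tendsto (fun i => ⟪μ i, p i⟫) l (𝓝 0)) : ⟪μ₀, p₀⟫ = 0 := by
  refine tendsto_nhds_unique (hμ.inner hp) ?_
  simpa [real_inner_smul_left] using hc.inv_tendsto_atTop.mul h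

end Rescaling

theorem tendsto_of_isProjection {ι E : Type*} [NormedAddCommGroup E] {l : Filter ι}
    {C : Set E} {z p : ι → E} {z₀ : E} (hp : ∀ i, IsProjection C (z i) (p i))
    (hz : Tendsto z l (𝓝 z₀)) (hz₀ : z₀ ∈ C) : Tendsto p l (𝓝 z₀) := by
  rw [tendsto_iff_norm_sub_tendsto_zero] at hz ⊢
  refine squeeze_zero (fun _ => norm_nonneg _) (fun i => ?_) (by simpa using hz.const_mul 2)
  calc ‖p i - z₀‖ ≤ ‖p i - z i‖ + ‖z i - z₀‖ := norm_sub_le_norm_sub_add_norm_sub ..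
    _ ≤ 2 * ‖z i - z₀‖ := by linarith [norm_sub_rev (p i) (z i), (hp i).2 z₀ hz₀]

theorem isClosed_polarCone {E : Type*} [NormedAddCommGroup E] [InnerProductSpace ℝ E]
    (C : Set E) : IsClosed (polarCone C) := by
  simpa only [polarCone, Set.ofPred_forall] using
    isClosed_biInter fun c _ => isClosed_le (continuous_id'.inner continuous_const) continuous_const

theorem smul_mem_polarCone {E : Type*} [NormedAddCommGroup E] [InnerProductSpace ℝ E]
    {C : Set E} {a : ℝ} {y : E} (ha : 0 ≤ a) (hy : y ∈ polarCone C) : a • y ∈ polarCone C :=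
  fun c hc => by simpa [real_inner_smul_left] using mul_nonpos_of_nonneg_of_nonpos ha (hy c hc)

theorem eq_zero_of_inner_nonpos_of_zero_mem_interior {E : Type*} [NormedAddCommGroup E]
    [InnerProductSpace ℝ E] {S : Set E} {μ : E} (hS : (0 : E) ∈ interior S)
    (hμ : ∀ w ∈ S, ⟪μ, w⟫ ≤ 0) : μ = 0 := by
  have hsmul : Tendsto (fun t : ℝ => t • μ) (𝓝[>] 0) (𝓝 0) := by
    have : Continuous fun t : ℝ => t • μ := continuous_id.smul continuous_const
    simpa using (this.tendsto 0).mono_left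
      (nhdsWithin_le_nhds (a := (0 : ℝ)) (s := Set.Ioi 0))
  obtain ⟨t, htS, ht⟩ :=
    ((hsmul.eventually_mem (mem_interior_iff_mem_nhds.1 hS)).and self_mem_nhdsWithin).exists
  have := hμ _ htS
  rw [real_inner_smul_right] at this
  exact real_inner_self_nonpos.1 (nonpos_of_mul_nonpos_right this ht)

theorem eq_zero_of_mem_polarCone_of_robinson {F E : Type*} [NormedAddCommGroup F]
    [InnerProductSpace ℝ F] [CompleteSpace F] [NormedAddCommGroup E] [InnerProductSpace ℝ E]
    [CompleteSpace E] {A : F →L[ℝ] E} {K : Set E} {y₀ μ : E}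
    (hA : (0 : E) ∈ interior {w : E | ∃ v : F, ∃ y ∈ K, w = A v + y - y₀})
    (hμK : μ ∈ polarCone K) (hμA : ContinuousLinearMap.adjoint A μ = 0) (hμy₀ : ⟪μ, y₀⟫ = 0) :
    μ = 0 := by
  refine eq_zero_of_inner_nonpos_of_zero_mem_interior hA ?_
  rintro _ ⟨v, y, hy, rfl⟩
  rw [inner_sub_right, inner_add_right, ← ContinuousLinearMap.adjoint_inner_left, hμA,
    inner_zero_left, hμy₀, zero_add, sub_zero]
  exact hμK y hy

theorem ContDiff.continuous_gradient {F : Type*} [NormedAddCommGroup F] [InnerProductSpace ℝ F]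
    [CompleteSpace F] {f : F → ℝ} (hf : ContDiff ℝ 1 f) : Continuous (gradient f) :=
  (InnerProductSpace.toDual ℝ F).symm.continuous.comp (hf.continuous_fderiv one_ne_zero)

theorem stmt_15_general
    {n : ℕ} {E : Type*} [NormedAddCommGroup E] [InnerProductSpace ℝ E] [FiniteDimensional ℝ E]
    (f : EuclideanSpace ℝ (Fin n) → ℝ) (hf : ContDiff ℝ 1 f)
    (g : EuclideanSpace ℝ (Fin n) → E) (hg : ContDiff ℝ 1 g)
    (K : Set E)
    (PK : E → E) (hPK : ∀ z, IsProjection K z (PK z))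
    (xbar : EuclideanSpace ℝ (Fin n)) (hfeas : g xbar ∈ K)
    -- Robinson's constraint qualification
    (hRobinson : (0 : E) ∈ interior
      {w : E | ∃ v : EuclideanSpace ℝ (Fin n), ∃ y ∈ K, w = fderiv ℝ g xbar v + y - g xbar})
    (xk : ℕ → EuclideanSpace ℝ (Fin n)) (hxk : Tendsto xk atTop (𝓝 xbar))
    (muk : ℕ → E) (hmuk : ∀ k, muk k ∈ polarCone K)
    (hstat : Tendsto (fun k =>
      gradient f (xk k) + (ContinuousLinearMap.adjoint (fderiv ℝ g (xk k))) (muk k))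
      atTop (𝓝 0))
    (hcomp : Tendsto (fun k => ⟪muk k, PK (g (xk k))⟫) atTop (𝓝 0)) :
    ∃ M : ℝ, ∀ k, ‖muk k‖ ≤ M := by
  by_contra hunb
  obtain ⟨σ, hσ, hc, μ, hμ, hlim⟩ := exists_tendsto_inv_norm_smul_of_unbounded hunb
  have hx : Tendsto (xk ∘ σ) atTop (𝓝 xbar) := hxk.comp hσ
  have hadjoint : Continuous fun x => ContinuousLinearMap.adjoint (fderiv ℝ g x) :=
    ContinuousLinearMap.adjoint.continuous.comp (hg.continuous_fderiv one_ne_zero)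
  have hker : ContinuousLinearMap.adjoint (fderiv ℝ g xbar) μ = 0 :=
    apply_eq_zero_of_tendsto_add_apply hc ((hf.continuous_gradient.tendsto xbar).comp hx)
      ((hadjoint.tendsto xbar).comp hx) hlim (hstat.comp hσ)
  have hpolar : μ ∈ polarCone K := (isClosed_polarCone K).mem_of_tendsto hlim
    (.of_forall fun m => smul_mem_polarCone (inv_nonneg.2 (norm_nonneg _)) (hmuk _))
  have hPKlim : Tendsto (fun m => PK (g (xk (σ m)))) atTop (𝓝 (g xbar)) :=
    tendsto_of_isProjection (fun _ => hPK _) ((hg.continuous.tendsto xbar).comp hx) hfeas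
  have hcompl : ⟪μ, g xbar⟫ = 0 := inner_eq_zero_of_tendsto_inner hc hlim hPKlim (hcomp.comp hσ)
  have hμ0 : μ = 0 := eq_zero_of_mem_polarCone_of_robinson hRobinson hpolar hker hcompl
  simp [hμ0] at hμ

theorem stmt_15
    {n : ℕ} {E : Type*} [NormedAddCommGroup E] [InnerProductSpace ℝ E] [FiniteDimensional ℝ E]
    (f : EuclideanSpace ℝ (Fin n) → ℝ) (hf : ContDiff ℝ 1 f)
    (g : EuclideanSpace ℝ (Fin n) → E) (hg : ContDiff ℝ 1 g)
    (K : Set E) (hKne : K.Nonempty) (hKcl : IsClosed K) (hKconv : Convex ℝ K)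
    (hKcone : ∀ c : ℝ, 0 ≤ c → ∀ x ∈ K, c • x ∈ K)
    (PK : E → E) (hPK : ∀ z, IsProjection K z (PK z))
    (xbar : EuclideanSpace ℝ (Fin n)) (hfeas : g xbar ∈ K)
    -- Robinson's constraint qualification
    (hRobinson : (0 : E) ∈ interior
      {w : E | ∃ v : EuclideanSpace ℝ (Fin n), ∃ y ∈ K, w = fderiv ℝ g xbar v + y - g xbar})
    (xk : ℕ → EuclideanSpace ℝ (Fin n)) (hxk : Tendsto xk atTop (𝓝 xbar))
    (muk : ℕ → E) (hmuk : ∀ k, muk k ∈ polarCone K)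
    (hstat : Tendsto (fun k =>
      gradient f (xk k) + (ContinuousLinearMap.adjoint (fderiv ℝ g (xk k))) (muk k))
      atTop (𝓝 0))
    (hcomp : Tendsto (fun k => ⟪muk k, PK (g (xk k))⟫) atTop (𝓝 0)) :
    ∃ M : ℝ, ∀ k, ‖muk k‖ ≤ M :=
  stmt_15_general f hf g hg K PK hPK xbar hfeas hRobinson xk hxk muk hmuk hstat hcomp
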